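/- Let k be a field of characteristic different from 2, l a positive integer, n = 2l, and r ≥ 2. Let w be a permutation of {1,…,n} with w(i') = w(i)' for all i, and define the associated signed permutation ẇ : ℤ^l → ℤ^l by ẇ(ξ)_i = ξ_{w^{-1}(i)} if w^{-1}(i) ≤ l and ẇ(ξ)_i = −ξ_{(w^{-1}(i))'} if w^{-1}(i) > l. Then for every ξ ∈ Λ_2(l,r), the k-linear map determined by e_{i_1}⊗⋯⊗e_{i_r} ↦ e_{w(i_1)}⊗⋯⊗e_{w(i_r)} restricts to a linear isomorphism N^ξ → N^{ẇ(ξ)} that commutes with the place permutation action of S_r and with the contraction operator C; in particular N^ξ and N^{ẇ(ξ)} are isomorphic as modules over the algebra of operators generated by the place permutations and C. -/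

import Mathlib

open scoped TensorProduct

noncomputable section

variable (k : Type) [Field k]

/-- The `j`-th standard basis vector of `V = k^n`. -/
def stdVec (n : ℕ) (j : Fin n) : Fin n → k := Pi.single j 1

/-- Tensor space `V^{⊗ r}` where `V = k^n`. -/
abbrev TensorSpace (n r : ℕ) := ⨂[k] _ : Fin r, (Fin n → k)

/-- The simple tensor `e_{i_1} ⊗ ⋯ ⊗ e_{i_r}` attached to a multi-index. -/
def simpleTensor (n r : ℕ) (f : Fin r → Fin n) : TensorSpace k n r :=
  PiTensorProduct.tprod k fun a => stdVec k n (f a)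

/-- The weight of a multi-index: its `j`-th entry is the number of positions `a`
with `f a = j`. -/
def weight (n r : ℕ) (f : Fin r → Fin n) : Fin n → ℕ :=
  fun j => (Finset.univ.filter fun a => f a = j).card

/-- `M^λ`: the span of the simple tensors of basis vectors whose multi-index has
weight `λ`. -/
def Mlam (n r : ℕ) (lam : Fin n → ℕ) : Submodule k (TensorSpace k n r) :=
  Submodule.span k
    {x | ∃ f : Fin r → Fin n, weight n r f = lam ∧ x = simpleTensor k n r f}

/-- The place permutation action of `σ ∈ S_r` on tensor space: the `a`-th tensor
factor of `(v_1 ⊗ ⋯ ⊗ v_r)·σ` is `v_{σ⁻¹ a}`. -/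
def placePerm (n r : ℕ) (σ : Equiv.Perm (Fin r)) :
    TensorSpace k n r →ₗ[k] TensorSpace k n r :=
  (PiTensorProduct.reindex k (fun _ : Fin r => Fin n → k) σ).toLinearMap

/-- The contraction operator `C` on `V^{⊗r}` for the symmetric bilinear form
`(e_i, e_j) = δ_{i,j'}` (`i' = n+1−i`, one-based, i.e. `Fin.rev`, zero-based):
the unique linear map with
`C(v₁ ⊗ v₂ ⊗ w) = (v₁, v₂) · (∑ j, e_j ⊗ e_{j'}) ⊗ w`. -/
def contraction (n r : ℕ) (_hr : 2 ≤ r) :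
    TensorSpace k n r →ₗ[k] TensorSpace k n r :=
  PiTensorProduct.lift
    (∑ i : Fin n, ∑ j : Fin n,
      (PiTensorProduct.tprod k).compLinearMap fun a : Fin r =>
        if a.val = 0 then (LinearMap.proj i).smulRight (stdVec k n j)
        else if a.val = 1 then
          (LinearMap.proj (Fin.rev i)).smulRight (stdVec k n (Fin.rev j))
        else LinearMap.id)

/-- For `n = 2l`, the map `π : Λ(n,r) → ℤ^l` given by
`π(λ) = (λ_1 − λ_{1'}, …, λ_l − λ_{l'})`, where `i' = n+1−i` (one-based),
i.e. `i' = 2l−1−i` in zero-based indexing. -/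
def piEven (l : ℕ) (lam : Fin (2 * l) → ℕ) : Fin l → ℤ :=
  fun i => (lam ⟨i.val, by have := i.isLt; omega⟩ : ℤ)
    - (lam ⟨2 * l - 1 - i.val, by have := i.isLt; omega⟩ : ℤ)

/-- `Λ₂(l,r)`: tuples `ξ ∈ ℤ^l` with `|ξ_1| + ⋯ + |ξ_l| = r − 2s` for some
integer `s` with `0 ≤ 2s ≤ r`. -/
def Lambda2 (l r : ℕ) : Set (Fin l → ℤ) :=
  {ξ | ∃ s : ℕ, 2 * s ≤ r ∧ ∑ i, |ξ i| = (r : ℤ) - 2 * s}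

/-- `N^ξ`: the sum of the `M^λ` over the fiber of `π` above `ξ`. -/
def Nxi2 (l r : ℕ) (ξ : Fin l → ℤ) : Submodule k (TensorSpace k (2 * l) r) :=
  ⨆ lam ∈ {lam : Fin (2 * l) → ℕ | (∑ j, lam j = r) ∧ piEven l lam = ξ},
    Mlam k (2 * l) r lam

/-- The linear endomorphism of tensor space determined on basis elements by
`e_{i_1} ⊗ ⋯ ⊗ e_{i_r} ↦ e_{w(i_1)} ⊗ ⋯ ⊗ e_{w(i_r)}`; on `V = k^n` the map
sends `e_i ↦ e_{w i}`, i.e. `v ↦ v ∘ w⁻¹`. -/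
def wAction (n r : ℕ) (w : Equiv.Perm (Fin n)) :
    TensorSpace k n r →ₗ[k] TensorSpace k n r :=
  PiTensorProduct.map fun _ => LinearMap.funLeft k k ⇑w⁻¹

/-- The signed permutation `ẇ : ℤ^l → ℤ^l` attached to `w ∈ S_{2l}`:
`ẇ(ξ)_i = ξ_{w⁻¹(i)}` if `w⁻¹(i) ≤ l` and `ẇ(ξ)_i = −ξ_{(w⁻¹(i))'}` otherwise
(one-based; zero-based, `(w⁻¹(i))' = 2l−1−w⁻¹(i)`). -/
def wdot (l : ℕ) (w : Equiv.Perm (Fin (2 * l))) (ξ : Fin l → ℤ) : Fin l → ℤ :=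
  fun i =>
    let j : Fin (2 * l) := w⁻¹ ⟨i.val, by have := i.isLt; omega⟩
    if h : j.val < l then ξ ⟨j.val, h⟩
    else -ξ ⟨2 * l - 1 - j.val, by have := j.isLt; omega⟩

lemma perm_apply_inv_self {α : Type*} (f : Equiv.Perm α) (x : α) : f (f⁻¹ x) = x :=
  f.apply_symm_apply x

lemma perm_inv_apply_self {α : Type*} (f : Equiv.Perm α) (x : α) : f⁻¹ (f x) = x :=
  f.symm_apply_apply x

lemma stdVec_comp (n : ℕ) (w : Equiv.Perm (Fin n)) (j : Fin n) :
    LinearMap.funLeft k k ⇑w⁻¹ (stdVec k n j) = stdVec k n (w j) := by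
  funext x
  simp [LinearMap.funLeft_apply, stdVec, Pi.single_apply, Equiv.Perm.inv_eq_iff_eq, Equiv.symm_apply_eq]

lemma wAction_tprod (n r : ℕ) (w : Equiv.Perm (Fin n)) (v : Fin r → Fin n → k) :
    wAction k n r w (PiTensorProduct.tprod k v)
      = PiTensorProduct.tprod k fun a => LinearMap.funLeft k k ⇑w⁻¹ (v a) := by
  simp [wAction, PiTensorProduct.map_tprod]

lemma wAction_simpleTensor (n r : ℕ) (w : Equiv.Perm (Fin n)) (f : Fin r → Fin n) :
    wAction k n r w (simpleTensor k n r f) = simpleTensor k n r (⇑w ∘ f) := by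
  rw [simpleTensor, wAction_tprod, simpleTensor]
  congr 1
  funext a
  exact stdVec_comp k n w (f a)

lemma wAction_left_inverse (n r : ℕ) (w : Equiv.Perm (Fin n)) (x : TensorSpace k n r) :
    wAction k n r w⁻¹ (wAction k n r w x) = x := by
  have : (wAction k n r w⁻¹) ∘ₗ wAction k n r w = LinearMap.id := by
    refine PiTensorProduct.ext (MultilinearMap.ext fun v => ?_)
    simp only [LinearMap.compMultilinearMap_apply, LinearMap.comp_apply, wAction,
      PiTensorProduct.map_tprod, LinearMap.id_apply]
    congr 1
    funext a
    funext x
    simp [LinearMap.funLeft_apply]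
  exact DFunLike.congr_fun this x

lemma weight_comp (n r : ℕ) (w : Equiv.Perm (Fin n)) (f : Fin r → Fin n) :
    weight n r (⇑w ∘ f) = weight n r f ∘ ⇑w⁻¹ := by
  funext j
  simp only [weight, Function.comp_apply]
  congr 1
  ext a
  simp [Equiv.Perm.eq_inv_iff_eq, eq_comm, Equiv.eq_symm_apply]

lemma hw_inv {n : ℕ} (w : Equiv.Perm (Fin n)) (hw : ∀ i, w (Fin.rev i) = Fin.rev (w i)) :
    ∀ i, w⁻¹ (Fin.rev i) = Fin.rev (w⁻¹ i) := by
  intro i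
  have h := hw (w⁻¹ i)
  rw [perm_apply_inv_self] at h
  rw [← h, perm_inv_apply_self]

lemma rev_mk {l : ℕ} (v : ℕ) (h : v < 2 * l) :
    Fin.rev (⟨v, h⟩ : Fin (2 * l)) = ⟨2 * l - 1 - v, by omega⟩ := by
  apply Fin.ext
  simp [Fin.val_rev]
  omega

lemma piEven_comp (l : ℕ) (w : Equiv.Perm (Fin (2 * l)))
    (hw : ∀ i, w (Fin.rev i) = Fin.rev (w i)) (lam : Fin (2 * l) → ℕ) :
    piEven l (lam ∘ ⇑w⁻¹) = wdot l w (piEven l lam) := by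
  have hw' := hw_inv w hw
  funext i
  have hil := i.isLt
  simp only [piEven, wdot, Function.comp_apply]
  set i0 : Fin (2 * l) := ⟨i.val, by omega⟩ with hi0
  set j : Fin (2 * l) := w⁻¹ i0 with hj
  have hjl := j.isLt
  have hrev : w⁻¹ ⟨2 * l - 1 - i.val, by omega⟩ = Fin.rev j := by
    rw [← rev_mk i.val (by omega), hw']
  rw [hrev]
  have hjrev : (Fin.rev j).val = 2 * l - 1 - j.val := by
    simp only [Fin.val_rev]; omega
  split_ifs with h
  · have e1 : (⟨(⟨j.val, h⟩ : Fin l).val, by omega⟩ : Fin (2 * l)) = j := Fin.ext rfl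
    have e2 : (⟨2 * l - 1 - (⟨j.val, h⟩ : Fin l).val, by omega⟩ : Fin (2 * l)) = Fin.rev j :=
      Fin.ext (by simp only [Fin.val_rev]; omega)
    rw [e1, e2]
  · have hnl : ¬ j.val < l := h
    have hl2 : 2 * l - 1 - j.val < l := by omega
    have e1 : (⟨(⟨2 * l - 1 - j.val, hl2⟩ : Fin l).val, by omega⟩ : Fin (2 * l)) = Fin.rev j :=
      Fin.ext (by show 2 * l - 1 - j.val = (Fin.rev j).val; simp only [Fin.val_rev]; omega)
    have e2 : (⟨2 * l - 1 - (⟨2 * l - 1 - j.val, hl2⟩ : Fin l).val, by omega⟩ : Fin (2 * l)) = j :=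
      Fin.ext (by show 2 * l - 1 - (2 * l - 1 - j.val) = j.val; omega)
    rw [e1, e2]
    ring

lemma wdot_eval_pos (l : ℕ) (ξ : Fin l → ℤ) (m : Fin (2 * l)) (i : Fin l)
    (hm : m.val = i.val) :
    (if h : m.val < l then ξ ⟨m.val, h⟩
      else -ξ ⟨2 * l - 1 - m.val, by have := m.isLt; omega⟩) = ξ i := by
  rw [dif_pos (by rw [hm]; exact i.isLt)]
  exact congrArg ξ (Fin.ext hm)

lemma wdot_eval_neg (l : ℕ) (ξ : Fin l → ℤ) (m : Fin (2 * l)) (i : Fin l)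
    (hm : m.val = 2 * l - 1 - i.val) (hil : i.val < l) :
    -(if h : m.val < l then ξ ⟨m.val, h⟩
      else -ξ ⟨2 * l - 1 - m.val, by have := m.isLt; omega⟩) = ξ i := by
  rw [dif_neg (by omega), neg_neg]
  exact congrArg ξ (Fin.ext (by show 2 * l - 1 - m.val = i.val; omega))

lemma wdot_inv (l : ℕ) (w : Equiv.Perm (Fin (2 * l)))
    (hw : ∀ i, w (Fin.rev i) = Fin.rev (w i)) (ξ : Fin l → ℤ) :
    wdot l w⁻¹ (wdot l w ξ) = ξ := by
  have hw' := hw_inv w hw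
  funext i
  have hil := i.isLt
  simp only [wdot, inv_inv]
  set i0 : Fin (2 * l) := ⟨i.val, by omega⟩ with hi0
  have hi0v : i0.val = i.val := rfl
  by_cases h : (w i0).val < l
  · rw [dif_pos h]
    refine wdot_eval_pos l ξ _ i ?_
    rw [show (⟨(⟨(w i0).val, h⟩ : Fin l).val, by omega⟩ : Fin (2 * l)) = w i0 from Fin.ext rfl,
      perm_inv_apply_self]
  · rw [dif_neg h]
    have hwl := (w i0).isLt
    refine wdot_eval_neg l ξ _ i ?_ hil
    rw [show (⟨(⟨2 * l - 1 - (w i0).val, by omega⟩ : Fin l).val, by omega⟩ : Fin (2 * l))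
        = Fin.rev (w i0) from Fin.ext (by
          show 2 * l - 1 - (w i0).val = (Fin.rev (w i0)).val
          simp only [Fin.val_rev]; omega),
      hw', perm_inv_apply_self]
    simp only [Fin.val_rev, hi0v]
    omega

lemma wAction_placePerm (n r : ℕ) (w : Equiv.Perm (Fin n)) (σ : Equiv.Perm (Fin r))
    (x : TensorSpace k n r) :
    wAction k n r w (placePerm k n r σ x) = placePerm k n r σ (wAction k n r w x) := by
  simpa [wAction, placePerm] using
    PiTensorProduct.map_reindex (fun _ : Fin r => LinearMap.funLeft k k ⇑w⁻¹) σ x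

lemma wAction_contraction (n r : ℕ) (hr : 2 ≤ r) (w : Equiv.Perm (Fin n))
    (hw : ∀ i, w (Fin.rev i) = Fin.rev (w i)) (x : TensorSpace k n r) :
    wAction k n r w (contraction k n r hr x) = contraction k n r hr (wAction k n r w x) := by
  have hw' := hw_inv w hw
  have key : (wAction k n r w) ∘ₗ contraction k n r hr
      = contraction k n r hr ∘ₗ wAction k n r w := by
    refine PiTensorProduct.ext (MultilinearMap.ext fun v => ?_)
    simp only [LinearMap.compMultilinearMap_apply, LinearMap.comp_apply, contraction, wAction,
      PiTensorProduct.lift.tprod, PiTensorProduct.map_tprod, MultilinearMap.sum_apply,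
      MultilinearMap.compLinearMap_apply, LinearMap.sum_apply, map_sum]
    apply Fintype.sum_equiv w
    intro i
    apply Fintype.sum_equiv w
    intro j
    congr 1
    funext a
    by_cases h0 : a.val = 0
    · rw [if_pos h0, if_pos h0]
      simp only [LinearMap.smulRight_apply, LinearMap.proj_apply, map_smul, stdVec_comp,
        LinearMap.funLeft_apply, perm_inv_apply_self]
    · by_cases h1 : a.val = 1
      · rw [if_neg h0, if_pos h1, if_neg h0, if_pos h1]
        simp only [LinearMap.smulRight_apply, LinearMap.proj_apply, map_smul, stdVec_comp,
          LinearMap.funLeft_apply, hw, hw', perm_inv_apply_self]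
      · rw [if_neg h0, if_neg h1, if_neg h0, if_neg h1]
        simp
  exact DFunLike.congr_fun key x

lemma map_Mlam (n r : ℕ) (w : Equiv.Perm (Fin n)) (lam : Fin n → ℕ) :
    Submodule.map (wAction k n r w) (Mlam k n r lam) = Mlam k n r (lam ∘ ⇑w⁻¹) := by
  rw [Mlam, Submodule.map_span, Mlam]
  congr 1
  ext x
  constructor
  · rintro ⟨y, ⟨f, hf, rfl⟩, rfl⟩
    refine ⟨⇑w ∘ f, ?_, wAction_simpleTensor k n r w f⟩
    rw [weight_comp, hf]
  · rintro ⟨g, hg, rfl⟩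
    refine ⟨simpleTensor k n r (⇑w⁻¹ ∘ g), ⟨⇑w⁻¹ ∘ g, ?_, rfl⟩, ?_⟩
    · rw [weight_comp, hg]
      funext j
      simp
    · rw [wAction_simpleTensor]
      congr 1
      funext a
      simp

lemma map_Nxi2 (l r : ℕ) (w : Equiv.Perm (Fin (2 * l)))
    (hw : ∀ i, w (Fin.rev i) = Fin.rev (w i)) (ξ : Fin l → ℤ) :
    Submodule.map (wAction k (2 * l) r w) (Nxi2 k l r ξ) = Nxi2 k l r (wdot l w ξ) := by
  have hw' := hw_inv w hw
  rw [Nxi2, Nxi2]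
  simp_rw [Submodule.map_iSup]
  apply le_antisymm
  · refine iSup₂_le fun lam hlam => ?_
    rw [map_Mlam]
    refine le_iSup₂_of_le (lam ∘ ⇑w⁻¹) ⟨?_, ?_⟩ le_rfl
    · rw [← hlam.1]
      simpa using Equiv.sum_comp w⁻¹ lam
    · rw [piEven_comp l w hw lam, hlam.2]
  · refine iSup₂_le fun mu hmu => ?_
    have hpi : piEven l (mu ∘ ⇑w) = ξ := by
      have h := piEven_comp l w⁻¹ hw' mu
      rw [inv_inv] at h
      rw [h, hmu.2, wdot_inv l w hw ξ]
    have hsum : ∑ j, (mu ∘ ⇑w) j = r := by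
      rw [← hmu.1]
      simpa using Equiv.sum_comp w mu
    refine le_iSup₂_of_le (mu ∘ ⇑w) ⟨hsum, hpi⟩ ?_
    rw [map_Mlam, show (mu ∘ ⇑w) ∘ ⇑w⁻¹ = mu by funext a; simp]

/-- for `char k ≠ 2`, `n = 2l`, and `w ∈ S_n` with
`w(i') = w(i)'` for all `i`, the map `e_{i_1} ⊗ ⋯ ⊗ e_{i_r} ↦
e_{w(i_1)} ⊗ ⋯ ⊗ e_{w(i_r)}` restricts to a linear isomorphism
`N^ξ → N^{ẇ(ξ)}` commuting with the place permutation action of `S_r` and with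
the contraction operator `C`. -/
theorem Nxi_iso_Nxi_of_weyl_orthogonal (h2 : (2 : k) ≠ 0) (l r : ℕ)
    (hl : 0 < l) (hr : 2 ≤ r) (w : Equiv.Perm (Fin (2 * l)))
    (hw : ∀ i, w (Fin.rev i) = Fin.rev (w i))
    (ξ : Fin l → ℤ) (hξ : ξ ∈ Lambda2 l r) :
    Submodule.map (wAction k (2 * l) r w) (Nxi2 k l r ξ)
        = Nxi2 k l r (wdot l w ξ)
      ∧ Set.InjOn (wAction k (2 * l) r w) (Nxi2 k l r ξ)
      ∧ (∀ σ : Equiv.Perm (Fin r), ∀ x ∈ Nxi2 k l r ξ,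
          wAction k (2 * l) r w (placePerm k (2 * l) r σ x)
            = placePerm k (2 * l) r σ (wAction k (2 * l) r w x))
      ∧ ∀ x ∈ Nxi2 k l r ξ,
          wAction k (2 * l) r w (contraction k (2 * l) r hr x)
            = contraction k (2 * l) r hr (wAction k (2 * l) r w x) := by
  refine ⟨map_Nxi2 k l r w hw ξ, ?_, ?_, ?_⟩
  · intro x _ y _ hxy
    have h := congrArg (wAction k (2 * l) r w⁻¹) hxy
    rwa [wAction_left_inverse, wAction_left_inverse] at h
  · intro σ x _
    exact wAction_placePerm k (2 * l) r w σ x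
  · intro x _
    exact wAction_contraction k (2 * l) r hr w hw x

end
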